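/- arXiv:2001.04736 — 4 statements merged into one kernel-verified Lean document; each statement's English description precedes it below -/
import Mathlib

section
/- Every solution in odd positive integers (u, v) of the Pell-type equation u² - 21·v² = 4 is given by (u + v·√21)/2 = ((5 + √21)/2)^t for some positive integer t not divisible by 3; in particular (u₀, v₀) = (5, 1) is the minimal solution. -/
private def aa : ℕ → ℤ
  | 0 => 2
  | 1 => 5
  | (n+2) => 5 * aa (n+1) - aa n

private def bb : ℕ → ℤ
  | 0 => 0
  | 1 => 1
  | (n+2) => 5 * bb (n+1) - bb n

private lemma step (n : ℕ) :
    2 * aa (n+1) = 5 * aa n + 21 * bb n ∧ 2 * bb (n+1) = aa n + 5 * bb n := by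
  induction n with
  | zero => simp [aa, bb]
  | succ n ih =>
    have ha : aa (n+1+1) = 5 * aa (n+1) - aa n := rfl
    have hb : bb (n+1+1) = 5 * bb (n+1) - bb n := rfl
    constructor <;> omega

private lemma real_eq (n : ℕ) :
    ((aa n : ℝ) + (bb n : ℝ) * Real.sqrt 21) / 2 = ((5 + Real.sqrt 21) / 2) ^ n := by
  induction n with
  | zero => simp [aa, bb]
  | succ n ih =>
    have hs : Real.sqrt 21 ^ 2 = 21 := Real.sq_sqrt (by norm_num)
    have h1 : (2:ℝ) * (aa (n+1) : ℝ) = 5 * (aa n : ℝ) + 21 * (bb n : ℝ) := by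
      exact_mod_cast (step n).1
    have h2 : (2:ℝ) * (bb (n+1) : ℝ) = (aa n : ℝ) + 5 * (bb n : ℝ) := by
      exact_mod_cast (step n).2
    rw [pow_succ, ← ih]
    linear_combination h1/4 + (Real.sqrt 21 / 4) * h2 - ((bb n : ℝ)/4) * hs

private lemma parity (n : ℕ) :
    aa (3*n) % 2 = 0 ∧ aa (3*n+1) % 2 = 1 ∧ aa (3*n+2) % 2 = 1 := by
  induction n with
  | zero => simp [aa]
  | succ n ih =>
    have e0 : 3*(n+1) = 3*n+3 := by ring
    have e1 : 3*(n+1)+1 = 3*n+4 := by ring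
    have e2 : 3*(n+1)+2 = 3*n+5 := by ring
    have ha0 : aa (3*n+3) = 5 * aa (3*n+2) - aa (3*n+1) := rfl
    have ha1 : aa (3*n+4) = 5 * aa (3*n+3) - aa (3*n+2) := rfl
    have ha2 : aa (3*n+5) = 5 * aa (3*n+4) - aa (3*n+3) := rfl
    rw [e0]
    show aa (3*n+3) % 2 = 0 ∧ aa (3*n+4) % 2 = 1 ∧ aa (3*n+5) % 2 = 1
    omega

private lemma descent : ∀ n : ℕ, ∀ u v : ℤ, 0 < u → 0 < v → v ≤ (n : ℤ) →
    u ^ 2 - 21 * v ^ 2 = 4 → ∃ t : ℕ, u = aa t ∧ v = bb t := by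
  intro n
  induction n with
  | zero => intro u v hu hv hle _; omega
  | succ n ih =>
    intro u v hu hv hle h
    by_cases hvn : v ≤ (n : ℤ)
    · exact ih u v hu hv hvn h
    · -- v = n+1
      by_cases hv1 : v = 1
      · subst hv1
        have hu5 : u = 5 := by nlinarith
        exact ⟨1, by simp [hu5, aa, bb]⟩
      · have hv2 : 2 ≤ v := by omega
        -- parity: u ≡ v mod 2
        have hpar : (2:ℤ) ∣ (u - v) := by
          have hz : ((u:ZMod 2) - v) = 0 := by
            have hh : ((u:ℤ) : ZMod 2)^2 - 21*((v:ℤ) : ZMod 2)^2 = 4 := by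
              have := congrArg (fun x : ℤ => (x : ZMod 2)) h
              push_cast at this
              exact this
            have pu : ((u:ℤ) : ZMod 2)^2 = ((u:ℤ) : ZMod 2) := by
              have := ZMod.pow_card ((u:ℤ) : ZMod 2)
              simpa using this
            have pv : ((v:ℤ) : ZMod 2)^2 = ((v:ℤ) : ZMod 2) := by
              have := ZMod.pow_card ((v:ℤ) : ZMod 2)
              simpa using this
            rw [pu, pv] at hh
            have h21 : (21 : ZMod 2) = 1 := by decide
            have h4 : (4 : ZMod 2) = 0 := by decide
            rw [h21, h4] at hh
            linear_combination hh
          have : ((u - v : ℤ) : ZMod 2) = 0 := by push_cast; exact hz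
          exact (ZMod.intCast_zmod_eq_zero_iff_dvd _ 2).mp this
        obtain ⟨w, hw⟩ := hpar
        have hu' : u = v + 2*w := by omega
        subst hu'
        set u' : ℤ := 5*w - 8*v with hu'def
        set v' : ℤ := 2*v - w with hv'def
        have key : u' ^ 2 - 21 * v' ^ 2 = 4 := by
          rw [hu'def, hv'def]; linear_combination h
        have hv'pos : 0 < v' := by nlinarith
        have hu'pos : 0 < u' := by nlinarith
        have hv'lt : v' < v := by nlinarith
        have hle' : v' ≤ (n : ℤ) := by omega
        obtain ⟨t, hat, hbt⟩ := ih u' v' hu'pos hv'pos hle' key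
        refine ⟨t+1, ?_, ?_⟩
        · have := (step t).1
          omega
        · have := (step t).2
          omega

theorem stmt_7 (u v : ℤ) (hu : Odd u) (hv : Odd v) (hupos : 0 < u) (hvpos : 0 < v)
    (h : u ^ 2 - 21 * v ^ 2 = 4) :
    ∃ t : ℕ, 0 < t ∧ ¬ (3 ∣ t) ∧
      ((u : ℝ) + (v : ℝ) * Real.sqrt 21) / 2 = ((5 + Real.sqrt 21) / 2) ^ t := by
  obtain ⟨t, hat, hbt⟩ := descent v.toNat u v hupos hvpos (by omega) h
  refine ⟨t, ?_, ?_, ?_⟩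
  · rcases Nat.eq_zero_or_pos t with h0 | h0
    · subst h0; simp [bb] at hbt; omega
    · exact h0
  · rintro ⟨k, rfl⟩
    have := (parity k).1
    have hodd := Int.odd_iff.mp hu
    omega
  · rw [hat, hbt]; exact real_eq t
end

section
/- If (u, v) is a solution in odd integers of u² - 21·v² = 4, then setting x = (3·u²·v - 7·v³)/4, y = (7·v² + u²)/4, c = (u³ - 21·u·v²)/4, these are integers satisfying 7·x² + c² = 4·y³. -/
theorem stmt_8 (u v : ℤ) (hu : Odd u) (hv : Odd v) (h : u ^ 2 - 21 * v ^ 2 = 4) :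
    ∃ x y c : ℤ, 4 * x = 3 * u ^ 2 * v - 7 * v ^ 3 ∧ 4 * y = 7 * v ^ 2 + u ^ 2 ∧
      4 * c = u ^ 3 - 21 * u * v ^ 2 ∧ 7 * x ^ 2 + c ^ 2 = 4 * y ^ 3 := by
  exact ⟨14 * v ^ 3 + 3 * v, 7 * v ^ 2 + 1, u,
    by linear_combination -3 * v * h, by linear_combination -h,
    by linear_combination -u * h, by linear_combination h⟩
end

section
/- If integers s, r satisfy s² - 21·r² = 1, then x = 567sr² + 99rs² + 5s³ + 945r³, y = 4s² + 42sr + 126r², c = -9s³ - 63s²r + 189sr² + 1323r³ satisfy 7·x² + c² = 4·y³. -/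
theorem stmt_11 (s r : ℤ) (h : s ^ 2 - 21 * r ^ 2 = 1) :
    7 * (567 * s * r ^ 2 + 99 * r * s ^ 2 + 5 * s ^ 3 + 945 * r ^ 3) ^ 2 +
      (-9 * s ^ 3 - 63 * s ^ 2 * r + 189 * s * r ^ 2 + 1323 * r ^ 3) ^ 2 =
      4 * (4 * s ^ 2 + 42 * s * r + 126 * r ^ 2) ^ 3 := by
  have h1 : s ^ 2 = 1 + 21 * r ^ 2 := by linarith
  nlinarith [sq_nonneg s, sq_nonneg r, sq_nonneg (s*r), h1, mul_self_nonneg (s^2 - 21*r^2 - 1)]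
end

section
/- The only squares in the Fibonacci sequence are F₀ = 0, F₁ = F₂ = 1, and F₁₂ = 144; i.e., if Fₖ = m² for integers k ≥ 0 and m, then k ∈ {0, 1, 2, 12}. -/
open Nat

def luc : ℕ → ℕ
  | 0 => 2
  | 1 => 1
  | (n+2) => luc (n+1) + luc n

@[simp] lemma luc_zero : luc 0 = 2 := rfl
@[simp] lemma luc_one : luc 1 = 1 := rfl
lemma luc_add_two (n : ℕ) : luc (n+2) = luc (n+1) + luc n := rfl

-- L n + F n = 2 F (n+1)
lemma luc_add_fib : ∀ n, luc n + fib n = 2 * fib (n+1)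
  | 0 => rfl
  | 1 => rfl
  | (n+2) => by
    have h1 := luc_add_fib n
    have h2 := luc_add_fib (n+1)
    rw [luc_add_two, fib_add_two, fib_add_two]
    omega

-- addition formula for luc
lemma luc_add : ∀ m c, luc (m + c + 1) = fib (m+1) * luc (c+1) + fib m * luc c
  | 0, c => by simp
  | 1, c => by
    have : 1 + c + 1 = c + 2 := by ring
    rw [this, luc_add_two]; simp [fib_one, fib_two]
  | (m+2), c => by
    have h1 := luc_add m c
    have h2 := luc_add (m+1) c
    have e2 : m + 2 + c + 1 = (m + c + 1) + 2 := by ring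
    have e3 : m + 1 + c + 1 = (m + c + 1) + 1 := by ring
    rw [e2, luc_add_two, ← e3, h1, h2, fib_add_two (n := m+1), fib_add_two (n := m)]
    ring

-- Lucas in terms of fib
lemma luc_eq_fib : ∀ n, luc (n+1) = fib (n+2) + fib n
  | 0 => rfl
  | 1 => rfl
  | (n+2) => by
    have h1 := luc_eq_fib n
    have h2 := luc_eq_fib (n+1)
    rw [luc_add_two, h1, h2, fib_add_two (n := n+2), fib_add_two (n := n)]
    ring

-- mixed Cassini identities (in ℤ)
lemma cassiniL : ∀ j c, (fib j : ℤ) * luc (j+c+1) - (fib (j+1) : ℤ) * luc (j+c)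
    = (-1)^(j+1) * luc c
  | 0, c => by simp
  | (j+1), c => by
    have h := cassiniL j c
    have e1 : luc (j + 1 + c + 1) = luc (j + c + 1) + luc (j + c) := by
      have e : j + 1 + c + 1 = (j + c) + 2 := by ring
      rw [e, luc_add_two]
    have e2 : fib (j + 1 + 1) = fib (j+1) + fib j := by
      rw [fib_add_two]; ring
    have e3 : j + 1 + c = j + c + 1 := by ring
    rw [e1, e2, e3, pow_succ _ (j+1)]
    push_cast
    linear_combination (-1 : ℤ) * h

lemma cassiniF : ∀ j c, (fib j : ℤ) * fib (j+c+1) - (fib (j+1) : ℤ) * fib (j+c)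
    = (-1)^(j+1) * fib c
  | 0, c => by simp
  | (j+1), c => by
    have h := cassiniF j c
    have e1 : fib (j + 1 + c + 1) = fib (j + c + 1) + fib (j + c) := by
      have e : j + 1 + c + 1 = (j + c) + 2 := by ring
      rw [e, fib_add_two]; ring
    have e2 : fib (j + 1 + 1) = fib (j+1) + fib j := by
      rw [fib_add_two]; ring
    have e3 : j + 1 + c = j + c + 1 := by ring
    rw [e1, e2, e3, pow_succ _ (j+1)]
    push_cast
    linear_combination (-1 : ℤ) * h

-- main shift identities
lemma S1 : ∀ b c, (fib (2*b + c) : ℤ) + (-1)^b * fib c = fib (b + c) * luc b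
  | 0, c => by simp; ring
  | (i+1), c => by
    have h := cassiniF (i+1) c
    have hadd := fib_add i (i+c+1)
    have hl := luc_eq_fib i
    have e1 : i + (i + c + 1) + 1 = 2*(i+1) + c := by ring
    have e2 : i + 1 + c + 1 = i + c + 2 := by ring
    have e3 : i + 1 + c = i + c + 1 := by ring
    have e4 : i + 1 + 1 = i + 2 := by ring
    rw [e1] at hadd
    rw [e2, e3, e4] at h
    rw [e3, hadd, hl, pow_succ _ (i+1)] at *
    push_cast
    linear_combination h

lemma S2 : ∀ b c, (luc (2*b + c) : ℤ) + (-1)^b * luc c = luc (b + c) * luc b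
  | 0, c => by simp; ring
  | (i+1), c => by
    have h := cassiniL (i+1) c
    have hadd := luc_add i (i+c+1)
    have hl := luc_eq_fib i
    have e1 : i + (i + c + 1) + 1 = 2*(i+1) + c := by ring
    have e2 : i + 1 + c + 1 = i + c + 2 := by ring
    have e3 : i + 1 + c = i + c + 1 := by ring
    have e4 : i + 1 + 1 = i + 2 := by ring
    rw [e1] at hadd
    rw [e2, e3, e4] at h
    rw [e3, hadd, hl, pow_succ _ (i+1)] at *
    push_cast
    linear_combination h

lemma S3 : ∀ b c, (fib (2*b + c) : ℤ) - (-1)^b * fib c = luc (b + c) * fib b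
  | 0, c => by simp
  | (i+1), c => by
    have h := cassiniF (i+1) c
    have hadd := fib_add i (i+c+1)
    have hl := luc_eq_fib (i+c)
    have hf2 : (fib (i+c+2) : ℤ) = fib (i+c) + fib (i+c+1) := by
      rw [fib_add_two]; push_cast; ring
    have hf3 : (fib (i+2) : ℤ) = fib i + fib (i+1) := by
      rw [fib_add_two]; push_cast; ring
    have e1 : i + (i + c + 1) + 1 = 2*(i+1) + c := by ring
    have e2 : i + 1 + c + 1 = i + c + 2 := by ring
    have e3 : i + 1 + c = i + c + 1 := by ring
    have e4 : i + 1 + 1 = i + 2 := by ring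
    have e5 : i + c + 1 + 1 = i + c + 2 := by ring
    rw [e1, e5] at hadd
    rw [pow_succ _ (i+1)] at h
    rw [e2, e3, e4] at h
    rw [e3, hadd, hl]
    push_cast
    linear_combination -h + (fib (i+1) : ℤ) * hf2 - (fib (i+c+1) : ℤ) * hf3

lemma fib_two_mul_eq (h : ℕ) : fib (2*h) = fib h * luc h := by
  have := S1 h 0
  simp at this
  have e : 2*h = 2*h + 0 := by ring
  rw [e]
  exact_mod_cast this

lemma luc_two_mul_even {k : ℕ} (hk : Even k) : luc (2*k) + 2 = luc k ^ 2 := by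
  have := S2 k 0
  rw [hk.neg_one_pow] at this
  simp at this
  have h2 : (luc (2*k) : ℤ) + 2 = (luc k : ℤ)^2 := by rw [sq]; exact this
  exact_mod_cast h2

lemma luc_two_mul_odd {k : ℕ} (hk : Odd k) : luc (2*k) = luc k ^ 2 + 2 := by
  have := S2 k 0
  rw [hk.neg_one_pow] at this
  simp at this
  have h2 : (luc (2*k) : ℤ) = (luc k : ℤ)^2 + 2 := by rw [sq]; linarith [this]
  exact_mod_cast h2

-- descent congruences, k even
lemma descentF {k : ℕ} (hk : Even k) : ∀ b c,
    (luc k : ℤ) ∣ (fib (2*k*b + c) : ℤ) - (-1)^b * fib c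
  | 0, c => by simp
  | (b+1), c => by
    have ih := descentF hk b c
    have hs := S1 k (2*k*b + c)
    rw [hk.neg_one_pow] at hs
    have e : 2*k + (2*k*b + c) = 2*k*(b+1) + c := by ring
    rw [e] at hs
    have : (fib (2*k*(b+1) + c) : ℤ) - (-1)^(b+1) * fib c
        = (fib (k + (2*k*b + c)) : ℤ) * luc k
          - ((fib (2*k*b + c) : ℤ) - (-1)^b * fib c) := by
      rw [pow_succ]; linarith [hs]
    rw [this]
    exact dvd_sub (Dvd.intro_left _ rfl) ih

lemma descentL {k : ℕ} (hk : Even k) : ∀ b c,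
    (luc k : ℤ) ∣ (luc (2*k*b + c) : ℤ) - (-1)^b * luc c
  | 0, c => by simp
  | (b+1), c => by
    have ih := descentL hk b c
    have hs := S2 k (2*k*b + c)
    rw [hk.neg_one_pow] at hs
    have e : 2*k + (2*k*b + c) = 2*k*(b+1) + c := by ring
    rw [e] at hs
    have : (luc (2*k*(b+1) + c) : ℤ) - (-1)^(b+1) * luc c
        = (luc (k + (2*k*b + c)) : ℤ) * luc k
          - ((luc (2*k*b + c) : ℤ) - (-1)^b * luc c) := by
      rw [pow_succ]; linarith [hs]
    rw [this]
    exact dvd_sub (Dvd.intro_left _ rfl) ih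

-- parity of fib
lemma fib_mod_two : ∀ n, fib n % 2 = if n % 3 = 0 then 0 else 1 := by
  intro n
  induction n using Nat.strong_induction_on with
  | _ n ih =>
    match n with
    | 0 => rfl
    | 1 => rfl
    | 2 => rfl
    | (m+3) =>
      have h1 := ih (m+1) (by omega)
      have h2 := ih (m+2) (by omega)
      have e : fib (m+3) = fib (m+1) + fib (m+2) := by
        rw [show m+3 = (m+1)+2 from by ring, fib_add_two]
      rw [e]
      have e3 : (m+3) % 3 = m % 3 := by omega
      rw [e3]
      have hlt : m % 3 = 0 ∨ m % 3 = 1 ∨ m % 3 = 2 := by omega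
      have hm1 : (m+1) % 3 = (m % 3 + 1) % 3 := by omega
      have hm2 : (m+2) % 3 = (m % 3 + 2) % 3 := by omega
      rw [hm1] at h1
      rw [hm2] at h2
      rcases hlt with h | h | h <;>
        · rw [h] at h1 h2 ⊢
          norm_num at h1 h2 ⊢ <;> omega

lemma luc_mod_two (n : ℕ) : luc n % 2 = fib n % 2 := by
  have := luc_add_fib n
  omega

lemma luc_odd_of_not_three_dvd {n : ℕ} (h : ¬ 3 ∣ n) : luc n % 2 = 1 := by
  rw [luc_mod_two, fib_mod_two]
  simp [Nat.dvd_iff_mod_eq_zero] at h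
  simp [h]

lemma fib_even_iff {n : ℕ} : fib n % 2 = 0 ↔ 3 ∣ n := by
  rw [fib_mod_two]
  rcases Nat.decEq (n % 3) 0 with h | h <;> simp [h, Nat.dvd_iff_mod_eq_zero]

lemma luc_pow_two_mod_four : ∀ j, luc (2^(j+1)) % 4 = 3
  | 0 => rfl
  | (j+1) => by
    have ih := luc_pow_two_mod_four j
    have hev : Even (2^(j+1)) := by
      exact (Nat.even_pow (n := j+1)).mpr ⟨even_two, by omega⟩
    have h2 := luc_two_mul_even hev
    rw [show (2:ℕ) * 2^(j+1) = 2^(j+1+1) from by ring] at h2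
    have hsq : luc (2^(j+1)) ^ 2 % 4 = 1 := by
      rw [Nat.pow_mod, ih]
    omega

lemma luc_pow_two_mod_three : ∀ j, luc (2^(j+2)) % 3 ≠ 0
  | 0 => by decide
  | (j+1) => by
    have hev : Even (2^(j+2)) := by
      exact (Nat.even_pow (n := j+2)).mpr ⟨even_two, by omega⟩
    have h2 := luc_two_mul_even hev
    rw [show (2:ℕ) * 2^(j+2) = 2^(j+1+2) from by ring] at h2
    have h1 : luc (2^(j+2)) % 3 ≠ 0 := luc_pow_two_mod_three j
    have hsq : luc (2^(j+2)) ^ 2 % 3 = (luc (2^(j+2)) % 3)^2 % 3 := Nat.pow_mod _ _ _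
    have : luc (2^(j+2)) % 3 = 1 ∨ luc (2^(j+2)) % 3 = 2 := by omega
    rcases this with h | h <;> rw [h] at hsq <;> omega

-- luc mod 8 has period 12
lemma luc_mod_eight_period (n : ℕ) : luc (n + 12) % 8 = luc n % 8 := by
  have h := luc_add 11 n
  have e : 11 + n + 1 = n + 12 := by ring
  rw [e] at h
  have h11 : fib 11 = 89 := by decide
  have h12 : fib 12 = 144 := by decide
  rw [h11, h12] at h
  omega

lemma luc_mod_eight (n : ℕ) : luc n % 8 = luc (n % 12) % 8 := by
  induction n using Nat.strong_induction_on with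
  | _ n ih =>
    rcases Nat.lt_or_ge n 12 with h | h
    · rw [Nat.mod_eq_of_lt h]
    · have e : n = (n - 12) + 12 := by omega
      rw [e, luc_mod_eight_period, ih (n-12) (by omega)]
      congr 2
      omega

-- squares mod 4
lemma sq_mod_four (x : ℕ) : x^2 % 4 = 0 ∨ x^2 % 4 = 1 := by
  rcases Nat.even_or_odd x with ⟨t, rfl⟩ | ⟨t, rfl⟩
  · left; have : (t+t)^2 = 4*t^2 := by ring
    rw [this]; omega
  · right; have : (2*t+1)^2 = 4*(t^2+t) + 1 := by ring
    rw [this]; omega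

lemma sq_add_two_ne_sq (x y : ℕ) : x^2 + 2 ≠ y^2 := by
  intro h
  rcases sq_mod_four x with hx | hx <;> rcases sq_mod_four y with hy | hy <;> omega

-- prime 3 mod 4 divisor
lemma exists_prime_three_mod_four {N : ℕ} (h : N % 4 = 3) :
    ∃ p, p.Prime ∧ p ∣ N ∧ p % 4 = 3 := by
  induction N using Nat.strong_induction_on with
  | _ N ih =>
    have hN1 : N ≠ 1 := by omega
    have hN0 : N ≠ 0 := by omega
    have hp := Nat.minFac_prime hN1
    set p := N.minFac with hpdef
    have hdvd : p ∣ N := Nat.minFac_dvd N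
    have hodd : p ≠ 2 := by
      intro h2
      have : 2 ∣ N := h2 ▸ hdvd
      omega
    have hp4 : p % 4 = 1 ∨ p % 4 = 3 := by
      have := hp.two_le
      have : p % 2 = 1 := Nat.odd_iff.mp (hp.odd_of_ne_two hodd)
      omega
    rcases hp4 with h1 | h3
    · obtain ⟨M, hM⟩ := hdvd
      have hM4 : M % 4 = 3 := by
        have := hp.two_le
        have hMlt : M % 4 < 4 := Nat.mod_lt _ (by norm_num)
        have : N % 4 = (p % 4) * (M % 4) % 4 := by rw [hM, Nat.mul_mod]
        rw [h1] at this
        omega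
      have hMlt : M < N := by
        have hp2 : 2 ≤ p := hp.two_le
        have hM0 : 0 < M := by
          rcases Nat.eq_zero_or_pos M with h0 | h0
          · rw [h0, Nat.mul_zero] at hM; omega
          · exact h0
        calc M < 2 * M := by omega
        _ ≤ p * M := Nat.mul_le_mul_right M hp2
        _ = N := hM.symm
      obtain ⟨q, hq, hqd, hq4⟩ := ih M hMlt hM4
      exact ⟨q, hq, hqd.trans ⟨p, by rw [hM]; ring⟩, hq4⟩
    · exact ⟨p, hp, hdvd, h3⟩

-- main contradiction lemma
lemma no_sq_neg_sq {N x y : ℕ} (hN : N % 4 = 3) (hdvd : (N : ℤ) ∣ (x : ℤ)^2 + (y : ℤ)^2)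
    (hy : Nat.Coprime y N) : False := by
  obtain ⟨p, hp, hpd, hp4⟩ := exists_prime_three_mod_four hN
  haveI : Fact p.Prime := ⟨hp⟩
  have hpd' : (p : ℤ) ∣ (x : ℤ)^2 + (y : ℤ)^2 := dvd_trans (Int.natCast_dvd_natCast.mpr hpd) hdvd
  have h0 : ((x : ZMod p))^2 + ((y : ZMod p))^2 = 0 := by
    have := (ZMod.intCast_zmod_eq_zero_iff_dvd _ p).mpr hpd'
    push_cast at this
    exact this
  have hy0 : (y : ZMod p) ≠ 0 := by
    rw [Ne, ZMod.natCast_eq_zero_iff]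
    intro hpy
    have : p ∣ Nat.gcd y N := Nat.dvd_gcd hpy hpd
    rw [hy] at this
    exact Nat.Prime.one_lt hp |>.ne' (Nat.dvd_one.mp this)
  have hsq : IsSquare (-1 : ZMod p) := by
    refine ⟨(x : ZMod p) * (y : ZMod p)⁻¹, ?_⟩
    have hx2 : ((x : ZMod p))^2 = -((y : ZMod p))^2 := by linear_combination h0
    field_simp
    linear_combination -hx2
  exact (ZMod.exists_sq_eq_neg_one_iff.mp hsq) hp4

lemma luc_mod_four_pow {a : ℕ} (ha : 2 ≤ a) : luc (2^(a-1)) % 4 = 3 := by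
  have e : a - 1 = (a - 2) + 1 := by omega
  rw [e]
  exact luc_pow_two_mod_four (a-2)

lemma luc_odd_pow (j : ℕ) : luc (2^j) % 2 = 1 := by
  apply luc_odd_of_not_three_dvd
  intro h
  have := Nat.Coprime.eq_one_of_dvd (Nat.Coprime.pow_right j (by norm_num : Nat.Coprime 3 2)) h
  omega

lemma keyF {n c a b : ℕ} (ha : 2 ≤ a) (hb : b % 2 = 1) (hn : n = c + 2^a * b) :
    (luc (2^(a-1)) : ℤ) ∣ (fib n : ℤ) + fib c := by
  set k := 2^(a-1) with hk
  have hke : Even k := by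
    rw [hk]; exact (Nat.even_pow (n := a-1)).mpr ⟨even_two, by omega⟩
  have h2k : 2 * k = 2^a := by
    rw [hk, ← pow_succ']
    congr 1
    omega
  have hd := descentF hke b c
  have e : 2*k*b + c = n := by rw [h2k, hn]; ring
  rw [e] at hd
  have hob : Odd b := Nat.odd_iff.mpr hb
  rw [hob.neg_one_pow] at hd
  have : (fib n : ℤ) - (-1) * fib c = fib n + fib c := by ring
  rwa [this] at hd

lemma keyL {n c a b : ℕ} (ha : 2 ≤ a) (hb : b % 2 = 1) (hn : n = c + 2^a * b) :
    (luc (2^(a-1)) : ℤ) ∣ (luc n : ℤ) + luc c := by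
  set k := 2^(a-1) with hk
  have hke : Even k := by
    rw [hk]; exact (Nat.even_pow (n := a-1)).mpr ⟨even_two, by omega⟩
  have h2k : 2 * k = 2^a := by
    rw [hk, ← pow_succ']
    congr 1
    omega
  have hd := descentL hke b c
  have e : 2*k*b + c = n := by rw [h2k, hn]; ring
  rw [e] at hd
  have hob : Odd b := Nat.odd_iff.mpr hb
  rw [hob.neg_one_pow] at hd
  have : (luc n : ℤ) - (-1) * luc c = luc n + luc c := by ring
  rwa [this] at hd

lemma coprime_two_luc (j : ℕ) : Nat.Coprime 2 (luc (2^j)) := by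
  rw [Nat.Prime.coprime_iff_not_dvd Nat.prime_two]
  intro h
  have := luc_odd_pow j
  omega

lemma coprime_six_luc {j : ℕ} (hj : 2 ≤ j) : Nat.Coprime 6 (luc (2^j)) := by
  have h2 := coprime_two_luc j
  have h3 : Nat.Coprime 3 (luc (2^j)) := by
    rw [Nat.Prime.coprime_iff_not_dvd Nat.prime_three]
    intro h
    have := luc_pow_two_mod_three (j-2)
    rw [show j - 2 + 2 = j from by omega] at this
    exact this (Nat.eq_zero_of_dvd_of_lt h (by omega) |> fun _ => by omega)
  have : (6 : ℕ) = 2 * 3 := by norm_num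
  rw [this]
  exact Nat.Coprime.mul h2 h3

theorem lucas_square {n x : ℕ} (h : luc n = x^2) : n = 1 ∨ n = 3 := by
  rcases Nat.even_or_odd n with ⟨t, ht⟩ | hodd
  · -- n even: luc n = luc t ^2 ± 2, impossible
    exfalso
    subst ht
    have e : t + t = 2 * t := by ring
    rw [e] at h
    rcases Nat.even_or_odd t with hte | hto
    · have := luc_two_mul_even hte
      rw [h] at this
      exact sq_add_two_ne_sq x (luc t) this
    · have := luc_two_mul_odd hto
      rw [h] at this
      exact sq_add_two_ne_sq (luc t) x this.symm
  · have h4 : n % 4 = 1 ∨ n % 4 = 3 := by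
      rcases hodd with ⟨t, ht⟩
      omega
    rcases h4 with h1 | h3
    · -- n ≡ 1 mod 4
      rcases Nat.eq_or_lt_of_le (by omega : 1 ≤ n) with he | hlt
      · left; omega
      · exfalso
        obtain ⟨a, b, hob, hab⟩ := Nat.exists_eq_two_pow_mul_odd (n := n - 1) (by omega)
        have ha2 : 2 ≤ a := by
          rcases hob with ⟨s, hs⟩
          match a with
          | 0 => omega
          | 1 => simp [pow_one] at hab; omega
          | (a+2) => omega
        have hdvd := keyL ha2 (Nat.odd_iff.mp hob) (by omega : n = 1 + 2^a * b)
        rw [h] at hdvd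
        have hdvd' : ((luc (2^(a-1)) : ℕ) : ℤ) ∣ (x : ℤ)^2 + (1 : ℕ)^2 := by
          push_cast
          push_cast at hdvd
          convert hdvd using 1
          try norm_num [luc_one]
        exact no_sq_neg_sq (luc_mod_four_pow ha2) hdvd' (Nat.coprime_one_left _)
    · -- n ≡ 3 mod 4
      rcases Nat.eq_or_lt_of_le (by omega : 3 ≤ n) with he | hlt
      · right; omega
      · exfalso
        obtain ⟨a, b, hob, hab⟩ := Nat.exists_eq_two_pow_mul_odd (n := n - 3) (by omega)
        have ha2 : 2 ≤ a := by
          rcases hob with ⟨s, hs⟩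
          match a with
          | 0 => omega
          | 1 => simp [pow_one] at hab; omega
          | (a+2) => omega
        have hdvd := keyL ha2 (Nat.odd_iff.mp hob) (by omega : n = 3 + 2^a * b)
        rw [h] at hdvd
        have hdvd' : ((luc (2^(a-1)) : ℕ) : ℤ) ∣ (x : ℤ)^2 + (2 : ℕ)^2 := by
          push_cast
          push_cast at hdvd
          convert hdvd using 1
          try norm_num [show luc 3 = 4 from rfl]
        exact no_sq_neg_sq (luc_mod_four_pow ha2) hdvd' (coprime_two_luc (a-1))

lemma keyF1 {n a b : ℕ} (ha : 2 ≤ a) (hb : b % 2 = 1) (hn : n + 1 = 2^a * b) :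
    (luc (2^(a-1)) : ℤ) ∣ (fib n : ℤ) + 1 := by
  set k := 2^(a-1) with hk
  have hke : Even k := by
    rw [hk]; exact (Nat.even_pow (n := a-1)).mpr ⟨even_two, by omega⟩
  have h2k : 2 * k = 2^a := by
    rw [hk, ← pow_succ']; congr 1; omega
  have hk2 : 2 ≤ k := by
    rw [hk]
    calc 2 = 2^1 := rfl
    _ ≤ 2^(a-1) := Nat.pow_le_pow_right (by norm_num) (by omega)
  obtain ⟨b', rfl⟩ : ∃ b', b = b' + 1 := ⟨b-1, by omega⟩
  rw [← h2k] at hn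
  have hexp : (2*k)*(b'+1) = 2*k*b' + 2*k := by ring
  have h1 := descentF hke b' (2*k-1)
  have e : 2*k*b' + (2*k-1) = n := by
    set A := 2*k*b' with hA
    omega
  rw [e] at h1
  have hevb : Even b' := Nat.even_iff.mpr (by omega)
  rw [hevb.neg_one_pow] at h1
  have h2 : (luc k : ℤ) ∣ (fib (2*k-1) : ℤ) + 1 := by
    have hs := S3 (k-1) 1
    have e1 : 2*(k-1) + 1 = 2*k - 1 := by omega
    have e2 : k - 1 + 1 = k := by omega
    have hok : Odd (k-1) := Nat.Even.sub_odd (by omega) hke odd_one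
    rw [e1, e2, hok.neg_one_pow] at hs
    have : (fib (2*k-1) : ℤ) + 1 = (luc k : ℤ) * fib (k-1) := by
      push_cast at hs ⊢
      simp [fib_one] at hs
      linarith [hs]
    rw [this]
    exact Dvd.intro _ rfl
  have : (fib n : ℤ) + 1
      = ((fib n : ℤ) - 1 * fib (2*k-1)) + ((fib (2*k-1) : ℤ) + 1) := by ring
  rw [this]
  exact dvd_add h1 h2

lemma keyL6 {n a b : ℕ} (ha : 3 ≤ a) (hb : b % 2 = 1) (hn : n + 6 = 2^a * b) :
    (luc (2^(a-1)) : ℤ) ∣ (luc n : ℤ) + 18 := by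
  set k := 2^(a-1) with hk
  have hke : Even k := by
    rw [hk]; exact (Nat.even_pow (n := a-1)).mpr ⟨even_two, by omega⟩
  have h2k : 2 * k = 2^a := by
    rw [hk, ← pow_succ']; congr 1; omega
  have hk4 : 4 ≤ k := by
    rw [hk]
    calc 4 = 2^2 := rfl
    _ ≤ 2^(a-1) := Nat.pow_le_pow_right (by norm_num) (by omega)
  obtain ⟨b', rfl⟩ : ∃ b', b = b' + 1 := ⟨b-1, by omega⟩
  rw [← h2k] at hn
  have hexp : (2*k)*(b'+1) = 2*k*b' + 2*k := by ring
  have h1 := descentL hke b' (2*k-6)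
  have e : 2*k*b' + (2*k-6) = n := by
    set A := 2*k*b' with hA
    omega
  rw [e] at h1
  have hevb : Even b' := Nat.even_iff.mpr (by omega)
  rw [hevb.neg_one_pow] at h1
  have h2 : (luc k : ℤ) ∣ (luc (2*k-6) : ℤ) + 18 := by
    rcases Nat.eq_or_lt_of_le hk4 with he | hlt
    · rw [← he]
      decide
    · have hk8 : 8 ≤ k := by
        have hcase : a = 3 ∨ 4 ≤ a := by omega
        rcases hcase with h3 | h4
        · rw [hk, h3] at hlt; norm_num at hlt
        · rw [hk]
          calc 8 = 2^3 := rfl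
          _ ≤ 2^(a-1) := Nat.pow_le_pow_right (by norm_num) (by omega)
      have hs := S2 (k-6) 6
      have e1 : 2*(k-6) + 6 = 2*k - 6 := by omega
      have e2 : k - 6 + 6 = k := by omega
      have hek : Even (k-6) := (Nat.even_sub (by omega)).mpr (by simpa using iff_of_true hke (by decide))
      rw [e1, e2, hek.neg_one_pow] at hs
      have : (luc (2*k-6) : ℤ) + 18 = (luc k : ℤ) * luc (k-6) := by
        push_cast at hs ⊢
        simp [show luc 6 = 18 from rfl] at hs
        linarith [hs]
      rw [this]
      exact Dvd.intro _ rfl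
  have : (luc n : ℤ) + 18
      = ((luc n : ℤ) - 1 * luc (2*k-6)) + ((luc (2*k-6) : ℤ) + 18) := by ring
  rw [this]
  exact dvd_add h1 h2

theorem lucas_two_square {n x : ℕ} (h : luc n = 2 * x^2) : n = 0 ∨ n = 6 := by
  have heven : luc n % 2 = 0 := by omega
  have h3n : 3 ∣ n := by
    rw [luc_mod_two] at heven
    exact fib_even_iff.mp heven
  rcases Nat.even_or_odd n with hne | hno
  · -- n even
    rcases Nat.eq_zero_or_pos n with h0 | hpos
    · left; exact h0
    · have h4 : n % 4 = 0 ∨ n % 4 = 2 := by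
        rcases hne with ⟨t, ht⟩; omega
      rcases h4 with h40 | h42
      · -- 4 ∣ n, n > 0
        exfalso
        obtain ⟨a, b, hob, hab⟩ := Nat.exists_eq_two_pow_mul_odd (n := n) (by omega)
        have ha2 : 2 ≤ a := by
          rcases hob with ⟨s, hs⟩
          match a with
          | 0 => omega
          | 1 => simp [pow_one] at hab; omega
          | (a+2) => omega
        have hdvd := keyL ha2 (Nat.odd_iff.mp hob) (by omega : n = 0 + 2^a * b)
        rw [h] at hdvd
        have hdvd' : ((luc (2^(a-1)) : ℕ) : ℤ) ∣ ((2*x : ℕ) : ℤ)^2 + (2 : ℕ)^2 := by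
          have h2 : ((luc (2^(a-1)) : ℕ) : ℤ) ∣ 2 * ((2*x^2 : ℕ) + (luc 0 : ℕ) : ℤ) :=
            Dvd.dvd.mul_left hdvd 2
          push_cast at h2 ⊢
          convert h2 using 1
          simp [show luc 0 = 2 from rfl]
          ring
        exact no_sq_neg_sq (luc_mod_four_pow ha2) hdvd' (coprime_two_luc (a-1))
      · -- n ≡ 2 mod 4, 3 ∣ n, so n ≡ 6 mod 12
        rcases eq_or_ne n 6 with h6 | h6
        · right; exact h6
        · exfalso
          have hn12 : n % 12 = 6 := by omega
          have hn18 : 18 ≤ n := by omega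
          have h8 : n % 8 = 2 ∨ n % 8 = 6 := by omega
          rcases h8 with h82 | h86
          · -- use keyL6 : n + 6 = 2^a b
            obtain ⟨a, b, hob, hab⟩ := Nat.exists_eq_two_pow_mul_odd (n := n + 6) (by omega)
            have ha3 : 3 ≤ a := by
              rcases hob with ⟨s, hs⟩
              match a with
              | 0 => omega
              | 1 => simp [pow_one] at hab; omega
              | 2 => norm_num at hab; omega
              | (a+3) => omega
            have hdvd := keyL6 ha3 (Nat.odd_iff.mp hob) hab
            rw [h] at hdvd
            have hdvd' : ((luc (2^(a-1)) : ℕ) : ℤ) ∣ ((2*x : ℕ) : ℤ)^2 + (6 : ℕ)^2 := by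
              have h2 : ((luc (2^(a-1)) : ℕ) : ℤ) ∣ 2 * (((2*x^2 : ℕ) : ℤ) + 18) :=
                Dvd.dvd.mul_left hdvd 2
              push_cast at h2 ⊢
              convert h2 using 1
              ring
            exact no_sq_neg_sq (luc_mod_four_pow (by omega)) hdvd' (coprime_six_luc (by omega))
          · -- n - 6 ≡ 0 mod 8 : keyL with c = 6
            obtain ⟨a, b, hob, hab⟩ := Nat.exists_eq_two_pow_mul_odd (n := n - 6) (by omega)
            have ha3 : 3 ≤ a := by
              rcases hob with ⟨s, hs⟩
              match a with
              | 0 => omega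
              | 1 => simp [pow_one] at hab; omega
              | 2 => norm_num at hab; omega
              | (a+3) => omega
            have hdvd := keyL (by omega : 2 ≤ a) (Nat.odd_iff.mp hob)
              (by omega : n = 6 + 2^a * b)
            rw [h] at hdvd
            have hdvd' : ((luc (2^(a-1)) : ℕ) : ℤ) ∣ ((2*x : ℕ) : ℤ)^2 + (6 : ℕ)^2 := by
              have h2 : ((luc (2^(a-1)) : ℕ) : ℤ) ∣ 2 * (((2*x^2 : ℕ) : ℤ) + (luc 6 : ℕ)) :=
                Dvd.dvd.mul_left hdvd 2
              push_cast at h2 ⊢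
              convert h2 using 1
              simp [show luc 6 = 18 from rfl]
              ring
            exact no_sq_neg_sq (luc_mod_four_pow (by omega)) hdvd' (coprime_six_luc (by omega))
  · -- n odd : n % 12 = 3 or 9, luc n % 8 = 4, but 2x² % 8 ∈ {0,2}
    exfalso
    have hn12 : n % 12 = 3 ∨ n % 12 = 9 := by
      rcases hno with ⟨t, ht⟩
      rcases h3n with ⟨s, hs⟩
      omega
    have h8 : luc n % 8 = 4 := by
      rw [luc_mod_eight]
      rcases hn12 with h | h <;> rw [h] <;> rfl
    rcases Nat.even_or_odd x with ⟨t, rfl⟩ | ⟨t, rfl⟩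
    · have e : 2 * (t+t)^2 = 8*t^2 := by ring
      rw [e] at h
      omega
    · have e : 2 * (2*t+1)^2 = 8*(t^2+t) + 2 := by ring
      rw [e] at h
      omega

lemma gcd_fib_luc_dvd_two (h : ℕ) : Nat.gcd (fib h) (luc h) ∣ 2 := by
  have hsum : luc h + fib h = 2 * fib (h+1) := luc_add_fib h
  have hd1 : Nat.gcd (fib h) (luc h) ∣ 2 * fib (h+1) := by
    rw [← hsum]
    exact dvd_add (Nat.gcd_dvd_right _ _) (Nat.gcd_dvd_left _ _)
  have hcop : Nat.Coprime (Nat.gcd (fib h) (luc h)) (fib (h+1)) :=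
    Nat.Coprime.coprime_dvd_left (Nat.gcd_dvd_left _ _) (Nat.fib_coprime_fib_succ h)
  exact hcop.dvd_of_dvd_mul_right hd1

theorem stmt_13 (k m : ℕ) (h : Nat.fib k = m ^ 2) :
    k = 0 ∨ k = 1 ∨ k = 2 ∨ k = 12 := by
  rcases Nat.even_or_odd k with ⟨t, ht⟩ | hodd
  · -- k even, k = 2t
    have ht2 : k = 2 * t := by omega
    subst ht2
    rcases Nat.eq_zero_or_pos t with h0 | hpos
    · left; omega
    · have hprod : fib t * luc t = m ^ 2 := by rw [← fib_two_mul_eq, h]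
      by_cases h3 : 3 ∣ t
      · -- both even, gcd = 2
        have hfe : fib t % 2 = 0 := fib_even_iff.mpr h3
        have hle : luc t % 2 = 0 := by rw [luc_mod_two]; exact hfe
        obtain ⟨u, hu⟩ : 2 ∣ fib t := Nat.dvd_of_mod_eq_zero hfe
        obtain ⟨v, hv⟩ : 2 ∣ luc t := Nat.dvd_of_mod_eq_zero hle
        have hm2 : m % 2 = 0 := by
          have : m ^ 2 % 2 = 0 := by
            rw [← hprod, hu, hv]
            have e : (2*u) * (2*v) = 2 * (2*u*v) := by ring
            rw [e]
            omega
          rcases Nat.even_or_odd m with ⟨s, rfl⟩ | ⟨s, rfl⟩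
          · omega
          · exfalso
            have : (2*s+1)^2 = 2*(2*s^2+2*s) + 1 := by ring
            omega
        obtain ⟨w, hw⟩ : 2 ∣ m := Nat.dvd_of_mod_eq_zero hm2
        have hvw : v * u = w ^ 2 := by
          have : (2*u) * (2*v) = (2*w)^2 := by rw [← hu, ← hv, ← hw, hprod]
          nlinarith [this]
        have hcop : Nat.Coprime v u := by
          have hg := gcd_fib_luc_dvd_two t
          rw [hu, hv] at hg
          have h2g : 2 * Nat.gcd u v = Nat.gcd (2*u) (2*v) := (Nat.gcd_mul_left 2 u v).symm
          have hg2 : 2 * Nat.gcd u v ∣ 2 := by rw [h2g]; exact hg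
          obtain ⟨c, hc⟩ := hg2
          rw [mul_assoc] at hc
          have : Nat.gcd u v ∣ 1 := ⟨c, by omega⟩
          rw [Nat.coprime_comm]
          exact Nat.eq_one_of_dvd_one this
        obtain ⟨c, hc⟩ := exists_eq_pow_of_mul_eq_pow
          (Nat.isUnit_iff.mpr hcop) hvw
        have : luc t = 2 * c^2 := by rw [hv, hc]
        rcases lucas_two_square this with h0' | h6
        · omega
        · right; right; right; omega
      · -- coprime case
        have hcop : Nat.Coprime (fib t) (luc t) := by
          have hg := gcd_fib_luc_dvd_two t
          have hfo : fib t % 2 = 1 := by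
            have := fib_mod_two t
            have : ¬ t % 3 = 0 := fun hc => h3 (Nat.dvd_of_mod_eq_zero hc)
            simp [fib_mod_two, this]
          have : ¬ 2 ∣ Nat.gcd (fib t) (luc t) := by
            intro hc
            have := hc.trans (Nat.gcd_dvd_left (fib t) (luc t))
            omega
          have hle2 : Nat.gcd (fib t) (luc t) ≤ 2 := Nat.le_of_dvd (by norm_num) hg
          have hzp : 0 < Nat.gcd (fib t) (luc t) :=
            Nat.gcd_pos_of_pos_left _ (Nat.fib_pos.mpr hpos)
          omega
        have hprod' : luc t * fib t = m ^ 2 := by rw [mul_comm]; exact hprod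
        obtain ⟨c, hc⟩ := exists_eq_pow_of_mul_eq_pow
          (Nat.isUnit_iff.mpr (Nat.coprime_comm.mp hcop)) hprod'
        rcases lucas_square hc with ht1 | ht3
        · right; right; left; omega
        · exfalso
          exact h3 (by rw [ht3] : (3:ℕ) ∣ t)
  · -- k odd
    have h4 : k % 4 = 1 ∨ k % 4 = 3 := by
      rcases hodd with ⟨t, ht⟩; omega
    rcases h4 with h1 | h3
    · rcases Nat.eq_or_lt_of_le (by omega : 1 ≤ k) with he | hlt
      · right; left; omega
      · exfalso
        obtain ⟨a, b, hob, hab⟩ := Nat.exists_eq_two_pow_mul_odd (n := k - 1) (by omega)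
        have ha2 : 2 ≤ a := by
          rcases hob with ⟨s, hs⟩
          match a with
          | 0 => omega
          | 1 => simp [pow_one] at hab; omega
          | (a+2) => omega
        have hdvd := keyF ha2 (Nat.odd_iff.mp hob) (by omega : k = 1 + 2^a * b)
        rw [h] at hdvd
        have hdvd' : ((luc (2^(a-1)) : ℕ) : ℤ) ∣ (m : ℤ)^2 + (1 : ℕ)^2 := by
          push_cast
          push_cast at hdvd
          convert hdvd using 1
          try simp [fib_one]
        exact no_sq_neg_sq (luc_mod_four_pow ha2) hdvd' (Nat.coprime_one_left _)
    · exfalso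
      obtain ⟨a, b, hob, hab⟩ := Nat.exists_eq_two_pow_mul_odd (n := k + 1) (by omega)
      have ha2 : 2 ≤ a := by
        rcases hob with ⟨s, hs⟩
        match a with
        | 0 => omega
        | 1 => simp [pow_one] at hab; omega
        | (a+2) => omega
      have hdvd := keyF1 ha2 (Nat.odd_iff.mp hob) hab
      rw [h] at hdvd
      have hdvd' : ((luc (2^(a-1)) : ℕ) : ℤ) ∣ (m : ℤ)^2 + (1 : ℕ)^2 := by
        push_cast
        push_cast at hdvd
        convert hdvd using 1
      exact no_sq_neg_sq (luc_mod_four_pow ha2) hdvd' (Nat.coprime_one_left _)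
end
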